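/- arXiv:2203.02627 — 6 statements merged into one kernel-verified Lean document; each statement's English description precedes it below -/
import Mathlib

section
/- Let Φ, Ψ : M_n(ℂ) → M_n(ℂ) be linear maps and define ⟨Φ,Ψ⟩_K := Σ_{i,j} tr(Φ(E_{ii})Ψ(E_{jj})*) + Σ_{i≠j} tr(Φ(E_{ij})Ψ(E_{ij})*). If v is a random vector with i.i.d. entries uniform on the unit circle and x := v ⊗ conj(v) (the rank-one matrix with entries v_i conj(v_j)), then E_v[tr(Φ(x)Ψ(x)*)] = ⟨Φ,Ψ⟩_K. -/
open MeasureTheory Matrix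

/-- The K-inner product on maps of matrices:
`⟨Φ,Ψ⟩_K = Σ_{i,j} tr(Φ(E_ii)Ψ(E_jj)*) + Σ_{i≠j} tr(Φ(E_ij)Ψ(E_ij)*)`. -/
noncomputable def Kip {n : ℕ}
    (Φ Ψ : Matrix (Fin n) (Fin n) ℂ → Matrix (Fin n) (Fin n) ℂ) : ℂ :=
  (∑ i, ∑ j, (Φ (Matrix.single i i 1) * (Ψ (Matrix.single j j 1))ᴴ).trace) +
    ∑ i, ∑ j, if i ≠ j then (Φ (Matrix.single i j 1) * (Ψ (Matrix.single i j 1))ᴴ).trace else 0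

/-- The uniform probability measure on `[0, 2π)`, parametrizing the unit circle. -/
noncomputable def circleUnif : Measure ℝ :=
  (ENNReal.ofReal (2 * Real.pi))⁻¹ • (volume.restrict (Set.Ico 0 (2 * Real.pi)))

/-- The random rank-one matrix `x = v ⊗ conj(v)` where `v m = exp(i θ m)`. -/
noncomputable def randX {n : ℕ} (θ : Fin n → ℝ) : Matrix (Fin n) (Fin n) ℂ :=
  Matrix.of fun i j =>
    Complex.exp ((θ i : ℂ) * Complex.I) * (starRingEnd ℂ) (Complex.exp ((θ j : ℂ) * Complex.I))

/-! Expanding `x = ∑ x_ij E_ij`, the integrand is the sesquilinear form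
`∑ x_ij conj(x_kl) tr(Φ(E_ij) Ψ(E_kl)*)`, so its expectation only involves the moments
`E[v_i conj(v_j) conj(v_k) v_l]`. This moment is `E[exp(i ⟨c, θ⟩)]` with
`c = e_i + e_l - e_j - e_k`, which by independence and `∫ exp(i c θ) dθ/2π = [c = 0]` is `1` exactly
for the pairings `i = j ∧ k = l` and `i = k ∧ j = l`, and `0` otherwise. Summing over the two
pairings, with the overlap `i = j = k = l` counted once, gives the two sums of `⟨Φ,Ψ⟩_K`. -/

open Complex

theorem trace_mul_conjTranspose_eq_sum {m n p q 𝕜 : Type*} [Fintype m] [Fintype n] [Fintype p]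
    [Fintype q] [DecidableEq m] [DecidableEq n] [CommRing 𝕜] [StarRing 𝕜]
    (Φ Ψ : Matrix m n 𝕜 →ₗ[𝕜] Matrix p q 𝕜) (X : Matrix m n 𝕜) :
    (Φ X * (Ψ X)ᴴ).trace = ∑ i, ∑ j, ∑ k, ∑ l,
      X i j * star (X k l) * (Φ (single i j 1) * (Ψ (single k l 1))ᴴ).trace := by
  have hX : X = ∑ i, ∑ j, X i j • single i j (1 : 𝕜) := by
    simpa [smul_single] using matrix_eq_sum_single X
  calc (Φ X * (Ψ X)ᴴ).trace
      = (Φ (∑ i, ∑ j, X i j • single i j 1) * (Ψ (∑ k, ∑ l, X k l • single k l 1))ᴴ).trace := by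
        rw [← hX]
    _ = _ := by
      simp only [map_sum, map_smul, conjTranspose_sum, conjTranspose_smul, Matrix.sum_mul]
      simp only [Matrix.mul_sum, Matrix.smul_mul, Matrix.mul_smul, trace_sum, trace_smul,
        smul_eq_mul, mul_assoc, mul_left_comm (star _)]

theorem integral_trace_mul_conjTranspose {Ω m n p q 𝕜 : Type*} [MeasurableSpace Ω]
    {μ : Measure Ω} [Fintype m] [Fintype n] [Fintype p] [Fintype q] [DecidableEq m]
    [DecidableEq n] [RCLike 𝕜] (Φ Ψ : Matrix m n 𝕜 →ₗ[𝕜] Matrix p q 𝕜) (X : Ω → Matrix m n 𝕜)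
    (hX : ∀ i j k l, Integrable (fun ω => X ω i j * star (X ω k l)) μ) :
    ∫ ω, (Φ (X ω) * (Ψ (X ω))ᴴ).trace ∂μ = ∑ i, ∑ j, ∑ k, ∑ l,
      (∫ ω, X ω i j * star (X ω k l) ∂μ) * (Φ (single i j 1) * (Ψ (single k l 1))ᴴ).trace := by
  simp_rw [trace_mul_conjTranspose_eq_sum]
  simp (maxDischargeDepth := 8) only [integral_finsetSum, integrable_finsetSum,
    integral_mul_const, Integrable.mul_const, hX, implies_true]

theorem sum_ite_pairing {ι M : Type*} [Fintype ι] [DecidableEq ι] [AddCommMonoid M]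
    (t : ι → ι → ι → ι → M) :
    ∑ i, ∑ j, ∑ k, ∑ l, (if (i = j ∧ k = l) ∨ (i = k ∧ j = l) then t i j k l else 0)
      = ∑ i, ∑ k, t i i k k + ∑ i, ∑ j, if i ≠ j then t i j i j else 0 := by
  have hdisjoint : ∀ i j k l,
      (if (i = j ∧ k = l) ∨ (i = k ∧ j = l) then t i j k l else 0)
        = (if i = j ∧ k = l then t i j k l else 0)
          + (if i ≠ j ∧ i = k ∧ j = l then t i j k l else 0) := by
    grind
  simp only [hdisjoint, Finset.sum_add_distrib, ite_and, Finset.sum_ite_irrel,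
    Finset.sum_const_zero, Finset.sum_ite_eq, Finset.mem_univ, if_true]

instance : IsProbabilityMeasure circleUnif := by
  constructor
  have h2π : (0 : ℝ) < 2 * Real.pi := by positivity
  simp only [circleUnif, Measure.smul_apply, Measure.restrict_apply MeasurableSet.univ,
    Set.univ_inter, Real.volume_Ico, sub_zero, smul_eq_mul]
  rw [ENNReal.inv_mul_cancel (ENNReal.ofReal_pos.mpr h2π).ne' ENNReal.ofReal_ne_top]

theorem integral_circleUnif_exp_int_mul_I (c : ℤ) :
    ∫ x : ℝ, exp (c * x * I) ∂circleUnif = if c = 0 then 1 else 0 := by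
  rcases eq_or_ne c 0 with rfl | hc
  · simp
  have h2π : (0 : ℝ) ≤ 2 * Real.pi := by positivity
  have hcI : (c : ℂ) * I ≠ 0 := by simp [hc, I_ne_zero]
  have hperiod : (c : ℂ) * I * (2 * Real.pi : ℝ) = c * (2 * Real.pi * I) := by push_cast; ring
  rw [if_neg hc, circleUnif, integral_smul_measure, restrict_Ico_eq_restrict_Ioc,
    ← intervalIntegral.integral_of_le h2π]
  simp_rw [mul_right_comm _ _ I]
  rw [integral_exp_mul_complex hcI, hperiod, exp_int_mul_two_pi_mul_I]
  simp

theorem integral_pi_circleUnif_exp_sum {ι : Type*} [Fintype ι] (c : ι → ℤ) :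
    ∫ θ : ι → ℝ, exp ((∑ m, (c m : ℂ) * θ m) * I) ∂(Measure.pi fun _ => circleUnif)
      = if c = 0 then 1 else 0 := by
  simp_rw [Finset.sum_mul, exp_sum]
  rw [integral_fintype_prod_eq_prod (fun m (x : ℝ) => exp (c m * x * I))]
  simp_rw [integral_circleUnif_exp_int_mul_I, Finset.prod_boole, funext_iff]
  simp

theorem randX_apply {n : ℕ} (θ : Fin n → ℝ) (i j : Fin n) :
    randX θ i j = exp ((θ i - θ j : ℝ) * I) := by
  rw [randX, of_apply, ← exp_conj, ← exp_add]
  congr 1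
  simp only [map_mul, conj_ofReal, conj_I, ofReal_sub]
  ring

theorem randX_mul_star_randX {n : ℕ} (θ : Fin n → ℝ) (i j k l : Fin n) :
    randX θ i j * star (randX θ k l) = exp ((∑ m,
      (((Pi.single i 1 + Pi.single l 1 - (Pi.single j 1 + Pi.single k 1) : Fin n → ℤ) m : ℤ) : ℂ)
        * θ m) * I) := by
  simp only [randX_apply, star_def, ← exp_conj, ← exp_add, map_mul, conj_ofReal, conj_I]
  congr 1
  simp only [Pi.sub_apply, Pi.add_apply, Pi.single_apply, Int.cast_sub, Int.cast_add,
    Int.cast_ite, Int.cast_one, Int.cast_zero, ite_mul, one_mul, zero_mul, sub_mul, add_mul,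
    Finset.sum_sub_distrib, Finset.sum_add_distrib, Finset.sum_ite_eq', Finset.mem_univ, if_true,
    ofReal_sub]
  ring

theorem integral_randX_mul_star {n : ℕ} (i j k l : Fin n) :
    ∫ θ, randX θ i j * star (randX θ k l) ∂(Measure.pi fun _ => circleUnif)
      = if (i = j ∧ k = l) ∨ (i = k ∧ j = l) then 1 else 0 := by
  simp_rw [randX_mul_star_randX, integral_pi_circleUnif_exp_sum, sub_eq_zero,
    Pi.single_add_single_eq_single_add_single one_ne_zero one_ne_zero]
  simp only [true_and, Int.reduceAdd, OfNat.ofNat_ne_zero, false_and, or_false, eq_comm (a := l)]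

theorem integrable_randX_mul_star {n : ℕ} (i j k l : Fin n) :
    Integrable (fun θ => randX θ i j * star (randX θ k l)) (Measure.pi fun _ => circleUnif) := by
  refine .of_bound (Continuous.aestronglyMeasurable ?_) 1 (ae_of_all _ fun θ => ?_)
  · simp_rw [randX_apply]
    fun_prop
  · simp only [randX_apply, norm_mul, norm_star, norm_exp_ofReal_mul_I, mul_one, le_refl]

theorem expectation_trace_eq_Kip {n : ℕ}
    (Φ Ψ : Matrix (Fin n) (Fin n) ℂ →ₗ[ℂ] Matrix (Fin n) (Fin n) ℂ) :
    ∫ θ : Fin n → ℝ, (Φ (randX θ) * (Ψ (randX θ))ᴴ).trace ∂(Measure.pi fun _ => circleUnif)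
      = Kip ⇑Φ ⇑Ψ := by
  rw [integral_trace_mul_conjTranspose Φ Ψ randX integrable_randX_mul_star]
  simp_rw [integral_randX_mul_star, boole_mul]
  exact sum_ite_pairing _
end

section
/- Let A, B ∈ M_n(ℂ) and let Φ(X) = A ∘ X and Ψ(X) = B ∘ X be the corresponding Schur (entrywise) multiplication maps. Then ⟨Φ,Ψ⟩_K = tr(B*A), i.e., the K-inner product of two Schur multipliers equals the Hilbert–Schmidt inner product of their symbol matrices. -/
/-!
A Schur multiplier sends a matrix unit `E_ij` to `A_ij E_ij`, and `tr (E_ij E_klᴴ)` vanishes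
unless `(i, j) = (k, l)`. So the diagonal part of `⟨Φ, Ψ⟩_K` contributes `Σ_i A_ii conj B_ii`,
the off-diagonal part `Σ_{i ≠ j} A_ij conj B_ij`, and together they give
`Σ_{i,j} A_ij conj B_ij = tr (Bᴴ A)`.
-/

open Matrix

theorem Finset.sum_diag_add_sum_offDiag {ι M : Type*} [Fintype ι] [DecidableEq ι]
    [AddCommMonoid M] (f : ι → ι → M) :
    ∑ i, f i i + ∑ i, ∑ j, (if i ≠ j then f i j else 0) = ∑ i, ∑ j, f i j := by
  rw [← Finset.sum_add_distrib]
  refine Finset.sum_congr rfl fun i _ => ?_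
  rw [← Finset.sum_filter, Finset.filter_ne, Finset.add_sum_erase _ _ (Finset.mem_univ i)]

namespace Matrix

variable {m n α : Type*}

theorem hadamard_single [DecidableEq m] [DecidableEq n] [MulZeroClass α]
    (A : Matrix m n α) (i : m) (j : n) (c : α) :
    A ⊙ single i j c = single i j (A i j * c) := by
  ext k l
  simp only [hadamard_apply, single_apply]
  split_ifs with h
  · obtain ⟨rfl, rfl⟩ := h
    rfl
  · exact mul_zero _

theorem trace_single_mul_conjTranspose_single [Fintype m] [Fintype n] [DecidableEq m]
    [DecidableEq n] [NonUnitalNonAssocSemiring α] [StarAddMonoid α]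
    (i k : m) (j l : n) (a b : α) :
    (single i j a * (single k l b)ᴴ).trace = if i = k ∧ j = l then a * star b else 0 := by
  rw [conjTranspose_single, trace_single_mul, single_apply]
  simp only [eq_comm, and_comm, smul_eq_mul, mul_ite, mul_zero]

theorem trace_conjTranspose_mul [Fintype m] [Fintype n] [NonUnitalCommSemiring α] [Star α]
    (A B : Matrix m n α) :
    (Bᴴ * A).trace = ∑ i, ∑ j, A i j * star (B i j) := by
  simp only [trace, diag, mul_apply, conjTranspose_apply]
  rw [Finset.sum_comm]
  simp only [mul_comm]

end Matrix

theorem Kip_schurMultipliers {n : ℕ} (A B : Matrix (Fin n) (Fin n) ℂ) :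
    Kip (fun X => A.hadamard X) (fun X => B.hadamard X) = (Bᴴ * A).trace := by
  simp only [Kip, hadamard_single, mul_one, trace_single_mul_conjTranspose_single, and_self,
    Finset.sum_ite_eq, Finset.mem_univ, if_true]
  rw [Finset.sum_diag_add_sum_offDiag fun i j => A i j * star (B i j), trace_conjTranspose_mul]
end

section
/- Let Φ : M_n(ℂ) → M_n(ℂ) be completely positive, and define B_Φ ∈ M_n(ℂ) by (B_Φ)_{ii} = ‖Φ(I_n)‖ (operator norm) for all i, and (B_Φ)_{ij} = (Φ(E_{ij}))_{ij} for i ≠ j. Then B_Φ is positive semidefinite. -/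
/-!
`B_Φ` is the principal submatrix `(Φ(E_ij)_ij)` of the Choi matrix at the indices `(i, i)`,
plus a diagonal matrix with entries `‖Φ(I)‖ - Φ(E_ii)_ii`. These are nonnegative: the diagonal
entries of the positive semidefinite matrix `Φ(I) = Σ_j Φ(E_jj)` dominate those of its summand
`Φ(E_ii)` and are bounded by its operator norm.
-/

open Matrix
open scoped ComplexOrder

/-- The Choi matrix of a map of matrices: `Ch(Φ) = Σ_{i,j} E_ij ⊗ Φ(E_ij)`. -/
def choiMatrix {n : ℕ} (Φ : Matrix (Fin n) (Fin n) ℂ → Matrix (Fin n) (Fin n) ℂ) :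
    Matrix (Fin n × Fin n) (Fin n × Fin n) ℂ :=
  Matrix.of fun p q => (Φ (Matrix.single p.1 q.1 1)) p.2 q.2

/-- A map is completely positive iff (Choi's theorem) its Choi matrix is positive
semidefinite. -/
def IsCPMap {n : ℕ} (Φ : Matrix (Fin n) (Fin n) ℂ → Matrix (Fin n) (Fin n) ℂ) : Prop :=
  (choiMatrix Φ).PosSemidef

/-- The operator (spectral) norm of a matrix, via its action on Euclidean space. -/
noncomputable def opNorm {n : ℕ} (A : Matrix (Fin n) (Fin n) ℂ) : ℝ :=
  ‖toEuclideanCLM (𝕜 := ℂ) A‖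

namespace Matrix

variable {ι 𝕜 : Type*} [Fintype ι] [DecidableEq ι] [RCLike 𝕜]

lemma norm_apply_le_norm_toEuclideanCLM (A : Matrix ι ι 𝕜) (i j : ι) :
    ‖A i j‖ ≤ ‖toEuclideanCLM (𝕜 := 𝕜) A‖ := by
  set e : EuclideanSpace 𝕜 ι := EuclideanSpace.single j 1
  calc ‖A i j‖ = ‖toEuclideanCLM (𝕜 := 𝕜) A e i‖ := by simp [e]
    _ ≤ ‖toEuclideanCLM (𝕜 := 𝕜) A e‖ := PiLp.norm_apply_le _ _
    _ ≤ ‖toEuclideanCLM (𝕜 := 𝕜) A‖ * ‖e‖ := ContinuousLinearMap.le_opNorm _ _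
    _ = ‖toEuclideanCLM (𝕜 := 𝕜) A‖ := by simp [e]

lemma PosSemidef.apply_self_le_norm_toEuclideanCLM {A : Matrix ι ι 𝕜} (hA : A.PosSemidef)
    (i : ι) : A i i ≤ (‖toEuclideanCLM (𝕜 := 𝕜) A‖ : 𝕜) :=
  calc A i i = (‖A i i‖ : 𝕜) := (RCLike.norm_of_nonneg' hA.diag_nonneg).symm
    _ ≤ _ := RCLike.ofReal_le_ofReal.mpr (norm_apply_le_norm_toEuclideanCLM A i i)

end Matrix

namespace IsCPMap

variable {n : ℕ}

lemma posSemidef_map_single_self {Φ : Matrix (Fin n) (Fin n) ℂ → Matrix (Fin n) (Fin n) ℂ}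
    (hΦ : IsCPMap Φ) (j : Fin n) : (Φ (single j j 1)).PosSemidef :=
  hΦ.submatrix fun l => (j, l)

lemma posSemidef_map_single_apply {Φ : Matrix (Fin n) (Fin n) ℂ → Matrix (Fin n) (Fin n) ℂ}
    (hΦ : IsCPMap Φ) : (Matrix.of fun i j => Φ (single i j 1) i j).PosSemidef :=
  hΦ.submatrix fun i => (i, i)

lemma map_one_eq_sum (Φ : Matrix (Fin n) (Fin n) ℂ →ₗ[ℂ] Matrix (Fin n) (Fin n) ℂ) :
    Φ 1 = ∑ j, Φ (single j j 1) := by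
  rw [← sum_single_one, map_sum]

variable {Φ : Matrix (Fin n) (Fin n) ℂ →ₗ[ℂ] Matrix (Fin n) (Fin n) ℂ}

lemma posSemidef_map_one (hΦ : IsCPMap Φ) : (Φ 1).PosSemidef := by
  rw [map_one_eq_sum]
  exact posSemidef_sum _ fun j _ => hΦ.posSemidef_map_single_self j

lemma map_single_self_apply_le (hΦ : IsCPMap Φ) (i : Fin n) :
    Φ (single i i 1) i i ≤ Φ 1 i i := by
  have hrest : Φ 1 - Φ (single i i 1) = ∑ j ∈ Finset.univ.erase i, Φ (single j j 1) := by
    rw [map_one_eq_sum, ← Finset.add_sum_erase _ _ (Finset.mem_univ i), add_sub_cancel_left]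
  have hpsd : (Φ 1 - Φ (single i i 1)).PosSemidef := by
    rw [hrest]
    exact posSemidef_sum _ fun j _ => hΦ.posSemidef_map_single_self j
  simpa only [Matrix.sub_apply, sub_nonneg] using hpsd.diag_nonneg (i := i)

end IsCPMap

theorem BPhi_posSemidef {n : ℕ}
    (Φ : Matrix (Fin n) (Fin n) ℂ →ₗ[ℂ] Matrix (Fin n) (Fin n) ℂ) (hΦ : IsCPMap ⇑Φ) :
    (Matrix.of fun i j =>
        if i = j then (opNorm (Φ 1) : ℂ) else (Φ (Matrix.single i j 1)) i j :
      Matrix (Fin n) (Fin n) ℂ).PosSemidef := by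
  have hdiag (i : Fin n) : Φ (single i i 1) i i ≤ (opNorm (Φ 1) : ℂ) :=
    (hΦ.map_single_self_apply_le i).trans
      (hΦ.posSemidef_map_one.apply_self_le_norm_toEuclideanCLM i)
  have hsplit : (Matrix.of fun i j =>
        if i = j then (opNorm (Φ 1) : ℂ) else (Φ (Matrix.single i j 1)) i j :
      Matrix (Fin n) (Fin n) ℂ) = (Matrix.of fun i j => Φ (single i j 1) i j) +
        diagonal fun i => (opNorm (Φ 1) : ℂ) - Φ (single i i 1) i i := by
    ext i j
    obtain rfl | hij := eq_or_ne i j <;> simp [*]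
  rw [hsplit]
  exact hΦ.posSemidef_map_single_apply.add
    (PosSemidef.diagonal fun i => sub_nonneg.mpr (hdiag i))
end

section
/- The linear map Φ : M_n(ℂ) → M_n(ℂ) given by Φ(A) = (tr(A)/n) I_n + Σ_{i≠j} (A_{ij}/n) E_{ij} is unital, trace-preserving, and completely positive, and its range is contained in the matricial system S_n = {X : X_{ii} = X_{jj} for all i,j}. -/
open Matrix
open scoped ComplexOrder

/-- `Φ(A) = (tr A / n) I + Σ_{i≠j} (A_ij / n) E_ij`. -/
noncomputable def PhiStar (n : ℕ) (A : Matrix (Fin n) (Fin n) ℂ) : Matrix (Fin n) (Fin n) ℂ :=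
  (A.trace / n) • (1 : Matrix (Fin n) (Fin n) ℂ) +
    ∑ i, ∑ j, if i ≠ j then (A i j / n) • Matrix.single i j (1 : ℂ) else 0

/-!
Every diagonal entry of `Φ(A)` is `tr A / n`, which gives unitality, trace preservation and the
constant diagonal at once. The Choi matrix is `n⁻¹ (D + ω ω*)`, where `ω = Σ_i e_i ⊗ e_i` and `D` is
the diagonal projection onto the span of the `e_i ⊗ e_k` with `i ≠ k`; both summands are positive
semidefinite.
-/

lemma phiStar_apply {n : ℕ} (A : Matrix (Fin n) (Fin n) ℂ) (a b : Fin n) :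
    PhiStar n A a b = if a = b then A.trace / n else A a b / n := by
  have hoff : (∑ i, ∑ j, if i ≠ j then (A i j / n) • single i j (1 : ℂ) else 0) =
      of fun i j => if i ≠ j then A i j / n else 0 := by
    conv_rhs => rw [matrix_eq_sum_single (of _)]
    refine Finset.sum_congr rfl fun i _ => Finset.sum_congr rfl fun j _ => ?_
    by_cases hij : i = j <;> simp [hij]
  rw [PhiStar, hoff]
  by_cases h : a = b <;> simp [one_apply, h]

lemma phiStar_apply_self {n : ℕ} (A : Matrix (Fin n) (Fin n) ℂ) (i : Fin n) :
    PhiStar n A i i = A.trace / n := by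
  simp [phiStar_apply]

lemma phiStar_one {n : ℕ} (hn : n ≠ 0) : PhiStar n 1 = 1 := by
  ext i j
  obtain rfl | h := eq_or_ne i j <;> simp [phiStar_apply, one_apply_ne, *]

lemma trace_phiStar {n : ℕ} (hn : n ≠ 0) (A : Matrix (Fin n) (Fin n) ℂ) :
    (PhiStar n A).trace = A.trace := by
  simp [trace, phiStar_apply_self, mul_div_cancel₀, hn]

lemma choiMatrix_phiStar (n : ℕ) :
    choiMatrix (PhiStar n) = (n : ℂ)⁻¹ •
      (diagonal (fun p : Fin n × Fin n => if p.1 = p.2 then 0 else 1) +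
        vecMulVec (fun p => if p.1 = p.2 then 1 else 0)
          (star fun p => if p.1 = p.2 then 1 else 0)) := by
  ext ⟨i, k⟩ ⟨j, l⟩
  obtain rfl | hij := eq_or_ne i j
  · simp [choiMatrix, phiStar_apply, vecMulVec_apply, single_apply, diagonal_apply, Prod.ext_iff,
      div_eq_inv_mul]
    grind
  · simp [choiMatrix, phiStar_apply, vecMulVec_apply, single_apply, diagonal_apply, Prod.ext_iff,
      div_eq_inv_mul, trace_single_eq_of_ne _ _ _ hij]
    grind

lemma posSemidef_choiMatrix_phiStar (n : ℕ) : (choiMatrix (PhiStar n)).PosSemidef := by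
  rw [choiMatrix_phiStar]
  refine .smul (.add (.diagonal fun p => ?_) (posSemidef_vecMulVec_self_star _)) (by positivity)
  split_ifs <;> simp

theorem PhiStar_properties {n : ℕ} (hn : 0 < n) :
    PhiStar n 1 = 1 ∧
    (∀ A : Matrix (Fin n) (Fin n) ℂ, (PhiStar n A).trace = A.trace) ∧
    (choiMatrix (PhiStar n)).PosSemidef ∧
    (∀ A : Matrix (Fin n) (Fin n) ℂ, ∀ i j, (PhiStar n A) i i = (PhiStar n A) j j) :=
  ⟨phiStar_one hn.ne', trace_phiStar hn.ne', posSemidef_choiMatrix_phiStar n,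
    fun A i j => (phiStar_apply_self A i).trans (phiStar_apply_self A j).symm⟩
end

section
/- Let Γ and Λ be graphs on n and k vertices respectively, and let φ_Lin be the SDP value: φ_Lin(G) = max{(1/|V(G)|)Σ_{ij}A_{ij} : A ⪰ 0, A_{ii}=1, A_{ij}=0 for non-edges i≠j}. Then φ_Lin(Γ ⊠ Λ) ≥ φ_Lin(Γ)·φ_Lin(Λ), where Γ ⊠ Λ is the strong graph product. (Supermultiplicativity direction via tensor product of feasible solutions.) -/
open Matrix SimpleGraph

/-- The SDP value `φ_Lin(G)`: maximize `(1/|V|) Σ_ij A_ij` over PSD matrices with unit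
diagonal vanishing on non-edges. -/
noncomputable def phiLin {V : Type*} [Fintype V] (G : SimpleGraph V) : ℝ :=
  sSup {r : ℝ | ∃ A : Matrix V V ℝ,
    A.PosSemidef ∧ (∀ i, A i i = 1) ∧ (∀ i j, i ≠ j → ¬G.Adj i j → A i j = 0) ∧
    r = (Fintype.card V : ℝ)⁻¹ * ∑ i, ∑ j, A i j}

/-- The strong product of two simple graphs: distinct pairs `(u,v)`, `(u',v')` are
adjacent iff (`u = u'` or `u ~ u'`) and (`v = v'` or `v ~ v'`). -/
def strongProd {V W : Type*} (G : SimpleGraph V) (H : SimpleGraph W) :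
    SimpleGraph (V × W) where
  Adj p q := p ≠ q ∧ (p.1 = q.1 ∨ G.Adj p.1 q.1) ∧ (p.2 = q.2 ∨ H.Adj p.2 q.2)
  symm := by
    constructor
    rintro p q ⟨hne, h1, h2⟩
    exact ⟨hne.symm, by tauto, by tauto⟩
  loopless := by constructor; rintro p ⟨hne, -, -⟩; exact hne rfl

/-! If `A` and `B` are feasible for `G` and `H`, so is `A ⊗ₖ B` for the strong product: it is
positive semidefinite with unit diagonal, and its entry `A i j * B k l` at a non-adjacent pair
`(i, k) ≠ (j, l)` vanishes because one of the factors sits at a non-adjacent pair of distinct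
vertices. Entry sums and vertex counts both multiply, so the objective does too, and taking
suprema of these nonnegative values gives the inequality. -/

open Kronecker

namespace Matrix

variable {m n : Type*} [Fintype m] [Fintype n]

theorem PosSemidef.two_mul_apply_le {A : Matrix n n ℝ} (hA : A.PosSemidef) (i j : n) :
    2 * A i j ≤ A i i + A j j := by
  classical
  have hsymm : A j i = A i j := by simpa using congrFun (congrFun hA.1 i) j
  have h := hA.dotProduct_mulVec_nonneg (Pi.single i 1 - Pi.single j 1)
  simp only [star_trivial, mulVec_sub, sub_dotProduct, dotProduct_sub, mulVec_single_one,
    single_one_dotProduct, col_apply] at h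
  linarith

theorem PosSemidef.sum_sum_nonneg {A : Matrix n n ℝ} (hA : A.PosSemidef) :
    0 ≤ ∑ i, ∑ j, A i j := by
  simpa [dotProduct, mulVec] using hA.dotProduct_mulVec_nonneg (fun _ => 1)

theorem sum_sum_kronecker {l p : Type*} [Fintype l] [Fintype p] {R : Type*} [CommSemiring R]
    (A : Matrix l m R) (B : Matrix n p R) :
    ∑ x, ∑ y, (A ⊗ₖ B) x y = (∑ i, ∑ j, A i j) * ∑ k, ∑ k', B k k' := by
  simp only [Fintype.sum_prod_type, kroneckerMap_apply, Finset.sum_mul_sum]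

end Matrix

theorem Real.sSup_mul_sSup_le {S T : Set ℝ} {M : ℝ} (hS : S.Nonempty) (hT : T.Nonempty)
    (hS₀ : ∀ a ∈ S, 0 ≤ a) (hT₀ : ∀ b ∈ T, 0 ≤ b) (h : ∀ a ∈ S, ∀ b ∈ T, a * b ≤ M) :
    sSup S * sSup T ≤ M := by
  have hrow : ∀ a ∈ S, a * sSup T ≤ M := fun a ha => by
    rw [← smul_eq_mul, ← Real.sSup_smul_of_nonneg (hS₀ a ha)]
    exact csSup_le hT.smul_set (Set.forall_mem_image.2 fun b hb => h a ha b hb)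
  rw [mul_comm, ← smul_eq_mul, ← Real.sSup_smul_of_nonneg (Real.sSup_nonneg hT₀)]
  exact csSup_le hS.smul_set
    (Set.forall_mem_image.2 fun a ha => (mul_comm _ _).trans_le (hrow a ha))

section PhiLin

variable {V W : Type*} [Fintype V] [Fintype W]

def phiLinValues (G : SimpleGraph V) : Set ℝ :=
  {r : ℝ | ∃ A : Matrix V V ℝ,
    A.PosSemidef ∧ (∀ i, A i i = 1) ∧ (∀ i j, i ≠ j → ¬G.Adj i j → A i j = 0) ∧
    r = (Fintype.card V : ℝ)⁻¹ * ∑ i, ∑ j, A i j}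

theorem phiLin_eq_sSup (G : SimpleGraph V) : phiLin G = sSup (phiLinValues G) := rfl

theorem phiLinValues_nonempty (G : SimpleGraph V) : (phiLinValues G).Nonempty := by
  classical
  exact ⟨_, 1, .one, fun _ => one_apply_eq _, fun _ _ hij _ => one_apply_ne hij, rfl⟩

theorem nonneg_of_mem_phiLinValues {G : SimpleGraph V} {r : ℝ} (hr : r ∈ phiLinValues G) :
    0 ≤ r := by
  obtain ⟨A, hA, -, -, rfl⟩ := hr
  exact mul_nonneg (by positivity) hA.sum_sum_nonneg

theorem phiLinValues_bddAbove (G : SimpleGraph V) : BddAbove (phiLinValues G) := by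
  refine ⟨Fintype.card V, ?_⟩
  rintro r ⟨A, hA, hdiag, -, rfl⟩
  have hentry : ∀ i j, A i j ≤ 1 := fun i j => by
    linarith [hA.two_mul_apply_le i j, hdiag i, hdiag j]
  calc (Fintype.card V : ℝ)⁻¹ * ∑ i, ∑ j, A i j
      ≤ (Fintype.card V : ℝ)⁻¹ * ∑ _i : V, ∑ _j : V, 1 := by gcongr with i _ j; exact hentry i j
    _ = Fintype.card V := by simp [mul_comm, mul_self_mul_inv]

theorem mul_mem_phiLinValues_strongProd {G : SimpleGraph V} {H : SimpleGraph W} {a b : ℝ}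
    (ha : a ∈ phiLinValues G) (hb : b ∈ phiLinValues H) :
    a * b ∈ phiLinValues (strongProd G H) := by
  classical
  obtain ⟨A, hA, hAdiag, hAzero, rfl⟩ := ha
  obtain ⟨B, hB, hBdiag, hBzero, rfl⟩ := hb
  refine ⟨A ⊗ₖ B, hA.kronecker hB, fun ⟨i, k⟩ => ?_, fun ⟨i, k⟩ ⟨j, l⟩ hne hadj => ?_, ?_⟩
  · simp [hAdiag, hBdiag]
  · have : ¬(i = j ∨ G.Adj i j) ∨ ¬(k = l ∨ H.Adj k l) := by
      by_contra! h
      exact hadj ⟨hne, h⟩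
    rcases this with hij | hkl
    · push Not at hij
      simp [hAzero i j hij.1 hij.2]
    · push Not at hkl
      simp [hBzero k l hkl.1 hkl.2]
  · rw [sum_sum_kronecker, Fintype.card_prod, Nat.cast_mul, mul_inv]
    ring

end PhiLin

theorem phiLin_strongProd_supermultiplicative_general {V W : Type*} [Fintype V] [Fintype W]
    (G : SimpleGraph V) (H : SimpleGraph W) :
    phiLin G * phiLin H ≤ phiLin (strongProd G H) := by
  simp only [phiLin_eq_sSup]
  exact Real.sSup_mul_sSup_le (phiLinValues_nonempty G) (phiLinValues_nonempty H)
    (fun _ => nonneg_of_mem_phiLinValues) (fun _ => nonneg_of_mem_phiLinValues)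
    fun _ ha _ hb => le_csSup (phiLinValues_bddAbove _) (mul_mem_phiLinValues_strongProd ha hb)

theorem phiLin_strongProd_supermultiplicative {V W : Type*} [Fintype V] [Fintype W]
    [Nonempty V] [Nonempty W] (G : SimpleGraph V) (H : SimpleGraph W) :
    phiLin G * phiLin H ≤ phiLin (strongProd G H) :=
  phiLin_strongProd_supermultiplicative_general G H
end

section
/- Let Φ, Ψ : M_n(ℂ) → M_n(ℂ) be completely positive unital maps, and define for a CP unital map Θ the matrix B_Θ by (B_Θ)_{ii} = 1 and (B_Θ)_{ij} = (Θ(E_{ij}))_{ij} for i ≠ j. Then ‖B_Φ - B_Ψ‖₂ ≤ ‖Φ - Ψ‖_K, where ‖·‖₂ is the Hilbert–Schmidt norm on M_n(ℂ) and ‖·‖_K is the norm induced by the K-inner product on linear maps. -/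
open Matrix
open scoped ComplexOrder

/-- The K-norm of a map of matrices. -/
noncomputable def Knorm {n : ℕ}
    (Φ : Matrix (Fin n) (Fin n) ℂ → Matrix (Fin n) (Fin n) ℂ) : ℝ :=
  Real.sqrt (Kip Φ Φ).re

/-- The Hilbert–Schmidt norm of a matrix. -/
noncomputable def hsNorm {n : ℕ} (A : Matrix (Fin n) (Fin n) ℂ) : ℝ :=
  Real.sqrt ((Aᴴ * A).trace.re)

/-- The matrix `B_Θ` of a unital CP map: ones on the diagonal and the `(i,j)` entries of
`Θ(E_ij)` off the diagonal. -/
def Bmat {n : ℕ} (Θ : Matrix (Fin n) (Fin n) ℂ → Matrix (Fin n) (Fin n) ℂ) :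
    Matrix (Fin n) (Fin n) ℂ :=
  Matrix.of fun i j => if i = j then 1 else (Θ (Matrix.single i j 1)) i j

/-! Write `Δ = Φ - Ψ`. The diagonal block of `Kip Δ Δ` is `tr (Δ I * (Δ I)ᴴ)`, which vanishes
because both maps are unital; what remains is `∑_{i ≠ j} ‖Δ E_ij‖₂²`, and each term dominates
`|(Δ E_ij)_ij|² = |(B_Φ - B_Ψ)_ij|²`, while the diagonal of `B_Φ - B_Ψ` is zero. -/

namespace Matrix

variable {m n : Type*} [Fintype m] [Fintype n]

lemma re_trace_mul_conjTranspose (X : Matrix m n ℂ) :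
    (X * Xᴴ).trace.re = ∑ i, ∑ j, Complex.normSq (X i j) := by
  simp [trace, mul_apply, Complex.mul_conj, Complex.re_sum]

lemma re_trace_conjTranspose_mul (X : Matrix m n ℂ) :
    (Xᴴ * X).trace.re = ∑ i, ∑ j, Complex.normSq (X i j) := by
  rw [← conjTranspose_conjTranspose X, conjTranspose_conjTranspose Xᴴ,
    re_trace_mul_conjTranspose, Finset.sum_comm]
  simp

lemma normSq_apply_le_sum_normSq (X : Matrix m n ℂ) (i : m) (j : n) :
    Complex.normSq (X i j) ≤ ∑ k, ∑ l, Complex.normSq (X k l) :=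
  calc Complex.normSq (X i j) ≤ ∑ l, Complex.normSq (X i l) :=
        Finset.single_le_sum (fun _ _ => Complex.normSq_nonneg _) (Finset.mem_univ j)
    _ ≤ ∑ k, ∑ l, Complex.normSq (X k l) :=
        Finset.single_le_sum (f := fun k => ∑ l, Complex.normSq (X k l))
          (fun _ _ => Finset.sum_nonneg fun _ _ => Complex.normSq_nonneg _) (Finset.mem_univ i)

end Matrix

section KNorm

variable {n : ℕ}

lemma sum_sum_trace_mul_conjTranspose_single_diag
    (Φ Ψ : Matrix (Fin n) (Fin n) ℂ →ₗ[ℂ] Matrix (Fin n) (Fin n) ℂ) :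
    ∑ i, ∑ j, (Φ (single i i 1) * (Ψ (single j j 1))ᴴ).trace = (Φ 1 * (Ψ 1)ᴴ).trace := by
  simp only [← sum_single_one, map_sum, conjTranspose_sum, Finset.mul_sum, Finset.sum_mul,
    trace_sum]
  exact Finset.sum_comm

lemma re_Kip_self_of_map_one_eq_zero (Δ : Matrix (Fin n) (Fin n) ℂ →ₗ[ℂ] Matrix (Fin n) (Fin n) ℂ)
    (hΔ : Δ 1 = 0) :
    (Kip ⇑Δ ⇑Δ).re =
      ∑ i, ∑ j, if i ≠ j then ∑ k, ∑ l, Complex.normSq (Δ (single i j 1) k l) else 0 := by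
  rw [Kip, sum_sum_trace_mul_conjTranspose_single_diag, hΔ, zero_mul, trace_zero, zero_add]
  simp only [Complex.re_sum, apply_ite Complex.re, Complex.zero_re, re_trace_mul_conjTranspose]

lemma Bmat_sub_Bmat_apply (Φ Ψ : Matrix (Fin n) (Fin n) ℂ →ₗ[ℂ] Matrix (Fin n) (Fin n) ℂ)
    (i j : Fin n) :
    (Bmat ⇑Φ - Bmat ⇑Ψ) i j = if i = j then 0 else (Φ - Ψ) (single i j 1) i j := by
  split_ifs with hij <;> simp [Bmat, hij, Matrix.sub_apply]

end KNorm

theorem hsNorm_B_le_Knorm_general {n : ℕ}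
    (Φ Ψ : Matrix (Fin n) (Fin n) ℂ →ₗ[ℂ] Matrix (Fin n) (Fin n) ℂ)
    (hΦ1 : Φ 1 = 1) (hΨ1 : Ψ 1 = 1) :
    hsNorm (Bmat ⇑Φ - Bmat ⇑Ψ) ≤ Knorm ⇑(Φ - Ψ) := by
  have hΔ : (Φ - Ψ) 1 = 0 := by simp [hΦ1, hΨ1]
  refine Real.sqrt_le_sqrt ?_
  rw [re_trace_conjTranspose_mul, re_Kip_self_of_map_one_eq_zero _ hΔ]
  refine Finset.sum_le_sum fun i _ => Finset.sum_le_sum fun j _ => ?_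
  rw [Bmat_sub_Bmat_apply]
  by_cases hij : i = j
  · simp [hij]
  · rw [if_neg hij, if_pos hij]
    exact normSq_apply_le_sum_normSq _ i j

theorem hsNorm_B_le_Knorm {n : ℕ}
    (Φ Ψ : Matrix (Fin n) (Fin n) ℂ →ₗ[ℂ] Matrix (Fin n) (Fin n) ℂ)
    (hΦcp : IsCPMap ⇑Φ) (hΨcp : IsCPMap ⇑Ψ)
    (hΦ1 : Φ 1 = 1) (hΨ1 : Ψ 1 = 1) :
    hsNorm (Bmat ⇑Φ - Bmat ⇑Ψ) ≤ Knorm ⇑(Φ - Ψ) :=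
  hsNorm_B_le_Knorm_general Φ Ψ hΦ1 hΨ1
end
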